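/- Let k ≥ 2 be an integer, let y_k be a real number with 0 < y_k < 1/2, and let delta ≥ 0 be real. For 1 ≤ j ≤ k define y_j = (1/2) * (2*y_k)^((j-1)/(k-1)) and z'_j = y_k / (y_j * (1 - y_k)); set z_1 = z'_1 and z_j = z'_j - z'_{j-1} for 2 ≤ j ≤ k; set w_1 = 1 and w_j = y_j for 2 ≤ j ≤ k. Then the inequality sum_{j=1}^{k} z_j * (w_j - delta) ≥ 1 holds if and only if (k - 1) * (1 - (2*y_k)^(1/(k-1))) ≥ (1 + delta - 3*y_k) / y_k. -/
import Mathlib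


theorem workload_inequality_iff (k : ℕ) (hk : 2 ≤ k)
    (yk : ℝ) (hyk0 : 0 < yk) (hyk1 : yk < 1 / 2)
    (delta : ℝ) (hdelta : 0 ≤ delta)
    (y : ℕ → ℝ)
    (hy : ∀ j, 1 ≤ j → j ≤ k →
      y j = (1 / 2) * (2 * yk) ^ (((j : ℝ) - 1) / ((k : ℝ) - 1)))
    (zp : ℕ → ℝ)
    (hzp : ∀ j, 1 ≤ j → j ≤ k → zp j = yk / (y j * (1 - yk)))
    (z : ℕ → ℝ) (hz1 : z 1 = zp 1)
    (hz : ∀ j, 2 ≤ j → j ≤ k → z j = zp j - zp (j - 1))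
    (w : ℕ → ℝ) (hw1 : w 1 = 1)
    (hw : ∀ j, 2 ≤ j → j ≤ k → w j = y j) :
    (∑ j ∈ Finset.Icc 1 k, z j * (w j - delta) ≥ 1) ↔
      ((k : ℝ) - 1) * (1 - (2 * yk) ^ ((1 : ℝ) / ((k : ℝ) - 1))) ≥
        (1 + delta - 3 * yk) / yk := by
  have hk2 : (2:ℝ) ≤ (k:ℝ) := by exact_mod_cast hk
  have hkm : (0:ℝ) < (k:ℝ) - 1 := by linarith
  have h2yk : (0:ℝ) < 2 * yk := by linarith
  have h1yk : (0:ℝ) < 1 - yk := by linarith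
  set r : ℝ := (2 * yk) ^ ((1:ℝ) / ((k:ℝ) - 1)) with hr
  have hrpos : 0 < r := Real.rpow_pos_of_pos h2yk _
  -- y in terms of r
  have hyr : ∀ j, 1 ≤ j → j ≤ k → y j = 1 / 2 * r ^ ((j:ℝ) - 1) := by
    intro j h1 h2
    rw [hy j h1 h2, hr, ← Real.rpow_mul h2yk.le]
    congr 2
    field_simp
  have hypos : ∀ j, 1 ≤ j → j ≤ k → 0 < y j := by
    intro j h1 h2
    rw [hyr j h1 h2]
    positivity
  have hstep : ∀ j, 2 ≤ j → j ≤ k → y j = y (j - 1) * r := by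
    intro j h1 h2
    rw [hyr j (by omega) h2, hyr (j - 1) (by omega) (by omega)]
    have hc : ((j - 1 : ℕ) : ℝ) = (j:ℝ) - 1 := by
      rw [Nat.cast_sub (by omega)]; simp
    rw [hc]
    have e1 : (j:ℝ) - 1 = ((j:ℝ) - 1 - 1) + 1 := by ring
    rw [e1, Real.rpow_add_one hrpos.ne']
    ring
  have hy1 : y 1 = 1 / 2 := by
    rw [hyr 1 le_rfl (by omega)]
    norm_num
  have hykk : y k = yk := by
    rw [hy k (by omega) le_rfl, div_self hkm.ne', Real.rpow_one]
    ring
  have hzp1 : zp 1 = 2 * yk / (1 - yk) := by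
    rw [hzp 1 le_rfl (by omega), hy1]
    field_simp
  have hzpk : zp k = 1 / (1 - yk) := by
    rw [hzp k (by omega) le_rfl, hykk]
    field_simp
  -- per-term value for j ∈ [2,k]
  have hterm : ∀ j, 2 ≤ j → j ≤ k →
      z j * (w j - delta)
        = yk / (1 - yk) - yk / (1 - yk) * r - delta * (zp j - zp (j - 1)) := by
    intro j h1 h2
    have ha : zp j * y j = yk / (1 - yk) := by
      rw [hzp j (by omega) h2]
      field_simp [(hypos j (by omega) h2).ne']
    have hb : zp (j - 1) * y j = yk / (1 - yk) * r := by
      rw [hzp (j - 1) (by omega) (by omega), hstep j h1 h2]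
      field_simp [(hypos (j - 1) (by omega) (by omega)).ne']
    rw [hz j h1 h2, hw j h1 h2]
    linear_combination ha - hb
  -- telescoping sum
  have htel : ∑ j ∈ Finset.Icc 2 k, (zp j - zp (j - 1)) = zp k - zp 1 := by
    rw [← Finset.Ico_add_one_right_eq_Icc, Finset.sum_Ico_eq_sum_range,
      show k + 1 - 2 = k - 1 from by omega]
    have h2 := Finset.sum_range_sub (fun i => zp (i + 1)) (k - 1)
    rw [show k - 1 + 1 = k from by omega] at h2
    rw [← h2]
    apply Finset.sum_congr rfl
    intro i _
    congr 1 <;> congr 1 <;> omega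
  have hsum2 : ∑ j ∈ Finset.Icc 2 k, z j * (w j - delta)
      = ((k:ℝ) - 1) * (yk / (1 - yk) - yk / (1 - yk) * r)
        - delta * (zp k - zp 1) := by
    calc ∑ j ∈ Finset.Icc 2 k, z j * (w j - delta)
        = ∑ j ∈ Finset.Icc 2 k,
            (yk / (1 - yk) - yk / (1 - yk) * r - delta * (zp j - zp (j - 1))) := by
          apply Finset.sum_congr rfl
          intro j hj
          simp only [Finset.mem_Icc] at hj
          exact hterm j hj.1 hj.2
      _ = _ := by
          rw [Finset.sum_sub_distrib, Finset.sum_const, ← Finset.mul_sum, htel,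
            Nat.card_Icc, nsmul_eq_mul,
            show ((k + 1 - 2 : ℕ) : ℝ) = (k:ℝ) - 1 from by
              rw [Nat.cast_sub (by omega)]; push_cast; ring]
  have hsplit : Finset.Icc 1 k = insert 1 (Finset.Icc 2 k) := by
    ext x
    simp only [Finset.mem_Icc, Finset.mem_insert]
    omega
  have hS : ∑ j ∈ Finset.Icc 1 k, z j * (w j - delta)
      = (2 * yk + yk * (((k:ℝ) - 1) * (1 - r)) - delta) / (1 - yk) := by
    rw [hsplit, Finset.sum_insert (by simp), hsum2, hz1, hw1, hzp1, hzpk]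
    field_simp
    ring
  rw [hS, ge_iff_le, ge_iff_le, le_div_iff₀ h1yk, div_le_iff₀ hyk0]
  constructor <;> intro h <;> nlinarith [h]
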